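/- arXiv:0912.4583 — 4 statements merged into one kernel-verified Lean document; each statement's English description precedes it below -/
import Mathlib

section
/- Every group homomorphism from the alternating group A₅ to the general linear group GL(2,ℂ) is trivial, i.e., it sends every element to the identity matrix. In particular, A₅ has no non-trivial two-dimensional complex linear representation. -/
open Matrix

private lemma sl2_involution (M : Matrix (Fin 2) (Fin 2) ℂ) (h1 : M * M = 1) (h2 : M.det = 1) :
    M = 1 ∨ M = -1 := by
  rw [Matrix.det_fin_two] at h2
  have e00 : (M * M) 0 0 = (1 : Matrix (Fin 2) (Fin 2) ℂ) 0 0 := by rw [h1]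
  have e01 : (M * M) 0 1 = (1 : Matrix (Fin 2) (Fin 2) ℂ) 0 1 := by rw [h1]
  have e10 : (M * M) 1 0 = (1 : Matrix (Fin 2) (Fin 2) ℂ) 1 0 := by rw [h1]
  have e11 : (M * M) 1 1 = (1 : Matrix (Fin 2) (Fin 2) ℂ) 1 1 := by rw [h1]
  simp [Matrix.mul_apply, Fin.sum_univ_two, Matrix.one_apply] at e00 e01 e10 e11
  set a := M 0 0 with ha
  set b := M 0 1 with hb
  set c := M 1 0 with hc
  set d := M 1 1 with hd
  have hat : a * (a + d) = 2 := by linear_combination e00 + h2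
  have hdt : d * (a + d) = 2 := by linear_combination e11 + h2
  have ht : a + d ≠ 0 := by
    intro h
    rw [h, mul_zero] at hat
    exact two_ne_zero hat.symm
  have hb0 : b = 0 := by
    have : b * (a + d) = 0 := by linear_combination e01
    rcases mul_eq_zero.mp this with h | h
    · exact h
    · exact absurd h ht
  have hc0 : c = 0 := by
    have : c * (a + d) = 0 := by linear_combination e10
    rcases mul_eq_zero.mp this with h | h
    · exact h
    · exact absurd h ht
  have had : a = d := by
    have : (a - d) * (a + d) = 0 := by linear_combination hat - hdt
    rcases mul_eq_zero.mp this with h | h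
    · exact sub_eq_zero.mp h
    · exact absurd h ht
  have ha2 : a * a = 1 := by
    rw [← had] at hat
    linear_combination hat / 2
  have : (a - 1) * (a + 1) = 0 := by linear_combination ha2
  rcases mul_eq_zero.mp this with h | h
  · left
    have ha1 : a = 1 := by linear_combination h
    ext i j
    fin_cases i <;> fin_cases j <;>
      simp [← ha, ← hb, ← hc, ← hd, Matrix.one_apply, ha1, hb0, hc0, had ▸ ha1]
  · right
    have ha1 : a = -1 := by linear_combination h
    ext i j
    fin_cases i <;> fin_cases j <;>
      simp [← ha, ← hb, ← hc, ← hd, Matrix.one_apply, ha1, hb0, hc0, had ▸ ha1]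

private def aPerm : Equiv.Perm (Fin 5) := Equiv.swap 0 1 * Equiv.swap 2 3
private def bPerm : Equiv.Perm (Fin 5) := Equiv.swap 0 1 * Equiv.swap 3 4
private def cPerm : Equiv.Perm (Fin 5) := Equiv.swap 0 1 * Equiv.swap 1 2

/-- Every group homomorphism from the alternating group `A₅` to `GL(2, ℂ)` is trivial:
it sends every element to the identity. In particular, `A₅` has no non-trivial
two-dimensional complex linear representation. -/
theorem A5_hom_GL2_trivial
    (φ : alternatingGroup (Fin 5) →* GL (Fin 2) ℂ) :
    ∀ g : alternatingGroup (Fin 5), φ g = 1 := by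
  by_contra hcon
  push_neg at hcon
  obtain ⟨g0, hg0⟩ := hcon
  -- φ is injective since A₅ is simple and φ is not trivial
  have hker : φ.ker = ⊥ := by
    rcases IsSimpleGroup.eq_bot_or_eq_top_of_normal φ.ker φ.normal_ker with h | h
    · exact h
    · exact absurd (MonoidHom.mem_ker.mp (h ▸ Subgroup.mem_top g0)) hg0
  have hinj : Function.Injective φ := (MonoidHom.ker_eq_bot_iff φ).mp hker
  -- special elements of A₅
  have haMem : aPerm ∈ alternatingGroup (Fin 5) := by
    rw [Equiv.Perm.mem_alternatingGroup]; decide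
  have hbMem : bPerm ∈ alternatingGroup (Fin 5) := by
    rw [Equiv.Perm.mem_alternatingGroup]; decide
  have hcMem : cPerm ∈ alternatingGroup (Fin 5) := by
    rw [Equiv.Perm.mem_alternatingGroup]; decide
  set aE : alternatingGroup (Fin 5) := ⟨aPerm, haMem⟩ with haE
  set bE : alternatingGroup (Fin 5) := ⟨bPerm, hbMem⟩ with hbE
  set cE : alternatingGroup (Fin 5) := ⟨cPerm, hcMem⟩ with hcE
  -- the composition with det is trivial, since A₅ is simple and non-abelian
  set ψ : alternatingGroup (Fin 5) →* ℂˣ :=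
    (Matrix.GeneralLinearGroup.det).comp φ with hψ
  have hdet : ∀ g, ψ g = 1 := by
    rcases IsSimpleGroup.eq_bot_or_eq_top_of_normal ψ.ker ψ.normal_ker with h | h
    · exfalso
      have hinjψ : Function.Injective ψ := (MonoidHom.ker_eq_bot_iff ψ).mp h
      have : aE * cE = cE * aE := hinjψ (by rw [_root_.map_mul, _root_.map_mul, mul_comm])
      have : aPerm * cPerm = cPerm * aPerm := congrArg Subtype.val this
      revert this
      decide
    · intro g
      exact MonoidHom.mem_ker.mp (h ▸ Subgroup.mem_top g)
  -- images of the involutions are -1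
  have key : ∀ x : alternatingGroup (Fin 5), (x : Equiv.Perm (Fin 5)) * x = 1 → x ≠ 1 →
      ((φ x : GL (Fin 2) ℂ) : Matrix (Fin 2) (Fin 2) ℂ) = -1 := by
    intro x hx2 hx1
    have hx2' : x * x = 1 := Subtype.ext hx2
    have hM2 : ((φ x : GL (Fin 2) ℂ) : Matrix (Fin 2) (Fin 2) ℂ) *
        ((φ x : GL (Fin 2) ℂ) : Matrix (Fin 2) (Fin 2) ℂ) = 1 := by
      have : φ x * φ x = 1 := by rw [← _root_.map_mul, hx2', _root_.map_one]
      calc ((φ x : GL (Fin 2) ℂ) : Matrix (Fin 2) (Fin 2) ℂ) *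
          ((φ x : GL (Fin 2) ℂ) : Matrix (Fin 2) (Fin 2) ℂ)
          = ((φ x * φ x : GL (Fin 2) ℂ) : Matrix (Fin 2) (Fin 2) ℂ) := rfl
        _ = ((1 : GL (Fin 2) ℂ) : Matrix (Fin 2) (Fin 2) ℂ) := by rw [this]
        _ = 1 := rfl
    have hMdet : (((φ x : GL (Fin 2) ℂ) : Matrix (Fin 2) (Fin 2) ℂ)).det = 1 := by
      have := hdet x
      have := congrArg Units.val this
      simpa [hψ] using this
    rcases sl2_involution _ hM2 hMdet with h | h
    · exfalso
      apply hx1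
      apply hinj
      rw [_root_.map_one]
      exact Units.ext h
    · exact h
  have haI : ((φ aE : GL (Fin 2) ℂ) : Matrix (Fin 2) (Fin 2) ℂ) = -1 := by
    have haa : aPerm * aPerm = 1 := by decide
    apply key aE haa
    intro h
    have : aPerm = 1 := congrArg Subtype.val h
    revert this; decide
  have hbI : ((φ bE : GL (Fin 2) ℂ) : Matrix (Fin 2) (Fin 2) ℂ) = -1 := by
    have hbb : bPerm * bPerm = 1 := by decide
    apply key bE hbb
    intro h
    have : bPerm = 1 := congrArg Subtype.val h
    revert this; decide
  have : aE = bE := hinj (Units.ext (haI.trans hbI.symm))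
  have : aPerm = bPerm := congrArg Subtype.val this
  revert this; decide
end

section
/- Every group homomorphism from the alternating group A₆ to the general linear group GL(2,ℂ) is trivial, i.e., it sends every element to the identity matrix. In particular, A₆ has no non-trivial two-dimensional complex linear representation. -/
open Matrix

/-!
A₆ is simple and perfect. Being perfect, its image in `GL(2, ℂ)` lies in `SL(2, ℂ)`, whose
only involution is `-1`: an involution of determinant one equals its own adjugate, which forces
it to be scalar. So a representation identifies the distinct involutions `(0 1)(2 3)` and
`(0 1)(4 5)`, hence is not faithful, and by simplicity it is trivial.
-/

theorem Matrix.eq_one_or_eq_neg_one_of_mul_self_eq_one_of_det_eq_one {R : Type*} [CommRing R]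
    [NoZeroDivisors R] (h2 : (2 : R) ≠ 0) {A : Matrix (Fin 2) (Fin 2) R} (hA : A * A = 1)
    (hdet : A.det = 1) : A = 1 ∨ A = -1 := by
  -- `A` is its own inverse, hence its own adjugate `!![A 1 1, -A 0 1; -A 1 0, A 0 0]`.
  have hadj : A.adjugate = A := calc
    A.adjugate = A * A * A.adjugate := by rw [hA, Matrix.one_mul]
    _ = A := by rw [Matrix.mul_assoc, mul_adjugate, hdet, one_smul, Matrix.mul_one]
  rw [adjugate_fin_two] at hadj
  have entry (i j : Fin 2) := congrFun (congrFun hadj i) j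
  simp only [of_apply, cons_val', empty_val', cons_val_fin_one] at entry
  have hdiag : A 1 1 = A 0 0 := entry 0 0
  have hoff (i j : Fin 2) (h : -A i j = A i j) : A i j = 0 :=
    (mul_eq_zero.1 (by linear_combination -h : (2 : R) * A i j = 0)).resolve_left h2
  have h01 := hoff 0 1 (entry 0 1)
  have h10 := hoff 1 0 (entry 1 0)
  rw [det_fin_two, hdiag, h01, h10, mul_zero, sub_zero] at hdet
  refine (mul_self_eq_one_iff.1 hdet).imp (fun h ↦ ?_) (fun h ↦ ?_) <;>
    ext i j <;> fin_cases i <;> fin_cases j <;> simp [h, hdiag, h01, h10]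

theorem Matrix.GeneralLinearGroup.eq_neg_one_of_sq_eq_one_of_det_eq_one {R : Type*} [CommRing R]
    [NoZeroDivisors R] (h2 : (2 : R) ≠ 0) {u : GL (Fin 2) R} (hu : u ^ 2 = 1) (hu1 : u ≠ 1)
    (hdet : GeneralLinearGroup.det u = 1) : u = -1 := by
  have hA : (u : Matrix (Fin 2) (Fin 2) R) * u = 1 := by
    rw [← Units.val_mul, ← sq, hu, Units.val_one]
  have hdet' : (u : Matrix (Fin 2) (Fin 2) R).det = 1 := congrArg Units.val hdet
  refine Units.ext <|
    (eq_one_or_eq_neg_one_of_mul_self_eq_one_of_det_eq_one h2 hA hdet').resolve_left ?_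
  exact fun h ↦ hu1 (Units.ext h)

theorem MonoidHom.not_injective_GL_two_of_commutator_eq_top {G R : Type*} [Group G] [CommRing R]
    [NoZeroDivisors R] (h2 : (2 : R) ≠ 0) (hG : commutator G = ⊤) {a b : G} (ha : a ^ 2 = 1)
    (hb : b ^ 2 = 1) (ha1 : a ≠ 1) (hb1 : b ≠ 1) (hab : a ≠ b) (φ : G →* GL (Fin 2) R) :
    ¬ Function.Injective φ := by
  intro hφ
  have hdet (g : G) : GeneralLinearGroup.det (φ g) = 1 :=
    Abelianization.commutator_subset_ker (GeneralLinearGroup.det.comp φ)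
      (hG ▸ Subgroup.mem_top g)
  have hinv {g : G} (hg : g ^ 2 = 1) (hg1 : g ≠ 1) : φ g = -1 :=
    GeneralLinearGroup.eq_neg_one_of_sq_eq_one_of_det_eq_one h2 (by rw [← map_pow, hg, map_one])
      (by rwa [← map_one φ, hφ.ne_iff]) (hdet g)
  exact hab (hφ (by rw [hinv ha ha1, hinv hb hb1]))

theorem MonoidHom.eq_one_of_not_injective {G H : Type*} [Group G] [IsSimpleGroup G] [Group H]
    (φ : G →* H) (hφ : ¬ Function.Injective φ) : φ = 1 := by
  rw [← MonoidHom.ker_eq_top_iff]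
  exact φ.normal_ker.eq_bot_or_eq_top.resolve_left fun h ↦ hφ ((φ.ker_eq_bot_iff).1 h)

/-- Every group homomorphism from the alternating group `A₆` (the Valentiner group)
to `GL(2, ℂ)` is trivial: it sends every element to the identity. In particular, `A₆`
has no non-trivial two-dimensional complex linear representation. -/
theorem A6_hom_GL2_trivial
    (φ : alternatingGroup (Fin 6) →* GL (Fin 2) ℂ) :
    ∀ g : alternatingGroup (Fin 6), φ g = 1 := by
  have h6 : 5 ≤ Nat.card (Fin 6) := by simp
  have := alternatingGroup.isSimpleGroup h6
  let a : alternatingGroup (Fin 6) := ⟨Equiv.swap 0 1 * Equiv.swap 2 3,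
    Equiv.Perm.mem_alternatingGroup.2 (by decide)⟩
  let b : alternatingGroup (Fin 6) := ⟨Equiv.swap 0 1 * Equiv.swap 4 5,
    Equiv.Perm.mem_alternatingGroup.2 (by decide)⟩
  have hφ := φ.not_injective_GL_two_of_commutator_eq_top two_ne_zero
    (commutator_alternatingGroup_eq_top h6) (a := a) (b := b)
    (by decide) (by decide) (by decide) (by decide) (by decide)
  exact DFunLike.congr_fun (φ.eq_one_of_not_injective hφ)
end

section
/- Let G be a finite simple group of order 168. Then every group homomorphism from G to the general linear group GL(2,ℂ) is trivial, i.e., it sends every element to the identity matrix. In particular, G has no non-trivial two-dimensional complex linear representation. -/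
open Matrix

lemma aux (A : Matrix (Fin 2) (Fin 2) ℂ) (h2 : A * A = 1) (hd : A.det = 1) :
    A = 1 ∨ A = -1 := by
  rw [Matrix.det_fin_two] at hd
  rw [← Matrix.ext_iff] at h2
  simp only [Fin.forall_fin_two, Matrix.mul_apply, Fin.sum_univ_two, Matrix.one_apply,
    if_true, if_false, one_ne_zero, zero_ne_one, ite_true, ite_false, Fin.one_eq_zero_iff,
    Fin.zero_eq_one_iff, Nat.succ_ne_self, ne_eq, OfNat.ofNat_ne_one, not_false_eq_true] at h2
  obtain ⟨⟨e00, e01⟩, e10, e11⟩ := h2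
  have ht : A 0 0 + A 1 1 ≠ 0 := by
    intro h
    have h2' : (2 : ℂ) = 0 := by linear_combination -hd - e00 + A 0 0 * h
    norm_num at h2'
  have hb : A 0 1 = 0 :=
    (mul_eq_zero.mp (show A 0 1 * (A 0 0 + A 1 1) = 0 by linear_combination e01)).resolve_right ht
  have hc : A 1 0 = 0 :=
    (mul_eq_zero.mp (show A 1 0 * (A 0 0 + A 1 1) = 0 by linear_combination e10)).resolve_right ht
  have ha : A 0 0 * A 0 0 = 1 := by linear_combination e00 - A 1 0 * hb
  have had : A 0 0 * A 1 1 = 1 := by linear_combination hd + A 1 0 * hb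
  have hane : A 0 0 ≠ 0 := fun h => by simp [h] at ha
  have hda : A 1 1 = A 0 0 := mul_left_cancel₀ hane (had.trans ha.symm)
  rcases mul_self_eq_one_iff.mp ha with h1 | h1
  · left
    ext i j
    fin_cases i <;> fin_cases j <;> simp [h1, hb, hc, hda, Matrix.one_apply]
  · right
    ext i j
    fin_cases i <;> fin_cases j <;> simp [h1, hb, hc, hda, Matrix.one_apply]

/-- Let `G` be a finite simple group of order 168 (i.e., Klein's simple group `L₂(7)`).
Every group homomorphism from `G` to `GL(2, ℂ)` is trivial: it sends every element to
the identity. In particular, `G` has no non-trivial two-dimensional complex linear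
representation. -/
theorem klein_hom_GL2_trivial
    (G : Type*) [Group G] [Finite G] [IsSimpleGroup G] (hG : Nat.card G = 168)
    (φ : G →* GL (Fin 2) ℂ) :
    ∀ g : G, φ g = 1 := by
  have hcomm : ¬ (∀ a b : G, a * b = b * a) := by
    intro h
    letI : CommGroup G := { mul_comm := h }
    have hp := IsSimpleGroup.prime_card (α := G)
    rw [hG] at hp
    norm_num at hp
  rcases IsSimpleGroup.eq_bot_or_eq_top_of_normal φ.ker φ.normal_ker with hker | hker
  · exfalso
    have hinj := (MonoidHom.ker_eq_bot_iff φ).mp hker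
    set ψ := (Matrix.GeneralLinearGroup.det : GL (Fin 2) ℂ →* ℂˣ).comp φ with hψ
    have hdet : ∀ g : G, Matrix.GeneralLinearGroup.det (φ g) = 1 := by
      rcases IsSimpleGroup.eq_bot_or_eq_top_of_normal ψ.ker ψ.normal_ker with h1 | h1
      · exact absurd (fun a b => (MonoidHom.ker_eq_bot_iff ψ).mp h1
          (by simp only [_root_.map_mul]; exact mul_comm _ _)) hcomm
      · intro g
        have : g ∈ ψ.ker := h1 ▸ Subgroup.mem_top g
        exact this
    haveI : Fact (Nat.Prime 2) := ⟨by norm_num⟩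
    obtain ⟨t, ht⟩ := exists_prime_orderOf_dvd_card' (G := G) 2 (by rw [hG]; norm_num)
    have ht2 : t * t = 1 := by
      have := pow_orderOf_eq_one t
      rwa [ht, pow_two] at this
    have hU2 : φ t * φ t = 1 := by rw [← _root_.map_mul, ht2, _root_.map_one]
    have hA2 : ((φ t : Matrix (Fin 2) (Fin 2) ℂ)) * (φ t : Matrix (Fin 2) (Fin 2) ℂ) = 1 := by
      simpa [Units.val_mul] using congrArg Units.val hU2
    have hAdet : ((φ t : Matrix (Fin 2) (Fin 2) ℂ)).det = 1 := by
      have := congrArg Units.val (hdet t)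
      simpa using this
    rcases aux _ hA2 hAdet with h1 | h1
    · have : φ t = 1 := Units.ext h1
      have : t = 1 := hinj (by simpa using this)
      rw [this, orderOf_one] at ht
      norm_num at ht
    · have hneg : φ t = -1 := Units.ext (by simpa using h1)
      have hcen : t ∈ Subgroup.center G := by
        rw [Subgroup.mem_center_iff]
        intro g
        apply hinj
        rw [_root_.map_mul, _root_.map_mul, hneg, mul_neg_one, neg_one_mul]
      rcases IsSimpleGroup.eq_bot_or_eq_top_of_normal (Subgroup.center G)
        inferInstance with hz | hz
      · rw [hz, Subgroup.mem_bot] at hcen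
        rw [hcen, orderOf_one] at ht
        norm_num at ht
      · exact hcomm fun a b => (Subgroup.mem_center_iff.mp (hz ▸ Subgroup.mem_top a) b).symm
  · intro g
    have : g ∈ φ.ker := hker ▸ Subgroup.mem_top g
    exact this
end

section
/- Let e₁ = X₀+⋯+X₄ and e₃ be the first and third elementary symmetric polynomials in ℂ[X₀,…,X₄]. For every nonzero vector x : Fin 5 → ℂ with e₁(x) = 0 and e₃(x) = 0, the two gradient vectors (1,1,1,1,1) and (∂e₃/∂X₀(x),…,∂e₃/∂X₄(x)) are linearly independent over ℂ. Consequently the cubic surface {σ₁ = σ₃ = 0} in ℙ⁴ (the Clebsch cubic) is smooth. -/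
open MvPolynomial

lemma pc3 : (Finset.powersetCard 3 (Finset.univ : Finset (Fin 5))) =
    ({{0,1,2},{0,1,3},{0,1,4},{0,2,3},{0,2,4},{0,3,4},{1,2,3},{1,2,4},{1,3,4},{2,3,4}} :
      Finset (Finset (Fin 5))) := by decide

lemma esymm3_expand : esymm (Fin 5) ℂ 3 =
    X 0*X 1*X 2 + X 0*X 1*X 3 + X 0*X 1*X 4 + X 0*X 2*X 3 + X 0*X 2*X 4 + X 0*X 3*X 4
    + X 1*X 2*X 3 + X 1*X 2*X 4 + X 1*X 3*X 4 + X 2*X 3*X 4 := by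
  rw [esymm, pc3]
  simp (config := {decide := true}) [Finset.sum_insert, Finset.prod_insert]
  ring

lemma key (x : Fin 5 → ℂ) (i : Fin 5) :
    eval x (pderiv i (esymm (Fin 5) ℂ 3)) =
      (x 0*x 1 + x 0*x 2 + x 0*x 3 + x 0*x 4 + x 1*x 2 + x 1*x 3 + x 1*x 4
        + x 2*x 3 + x 2*x 4 + x 3*x 4)
      + x i ^ 2 - x i * (x 0 + x 1 + x 2 + x 3 + x 4) := by
  fin_cases i <;>
    (rw [esymm3_expand]; simp [pderiv_mul, pderiv_X]; ring)

/-- Let `e₁` and `e₃` be the first and third elementary symmetric polynomials in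
`ℂ[X₀,…,X₄]`. For every nonzero `x : Fin 5 → ℂ` with `e₁(x) = 0` and `e₃(x) = 0`, the
gradient vectors `(1,1,1,1,1)` and `(∂e₃/∂X₀(x), …, ∂e₃/∂X₄(x))` are linearly
independent over ℂ. Consequently the Clebsch cubic surface `{σ₁ = σ₃ = 0} ⊂ ℙ⁴`
is smooth. -/
theorem clebsch_cubic_smooth
    (x : Fin 5 → ℂ) (hx : x ≠ 0)
    (h1 : eval x (esymm (Fin 5) ℂ 1) = 0)
    (h3 : eval x (esymm (Fin 5) ℂ 3) = 0) :
    LinearIndependent ℂ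
      ![(fun _ => (1 : ℂ) : Fin 5 → ℂ),
        (fun i => eval x (pderiv i (esymm (Fin 5) ℂ 3)) : Fin 5 → ℂ)] := by
  have hsum : x 0 + x 1 + x 2 + x 3 + x 4 = 0 := by
    simpa [esymm_one, Fin.sum_univ_five] using h1
  set c : ℂ := x 0*x 1 + x 0*x 2 + x 0*x 3 + x 0*x 4 + x 1*x 2 + x 1*x 3 + x 1*x 4
      + x 2*x 3 + x 2*x 4 + x 3*x 4 with hc
  have key' : ∀ i, eval x (pderiv i (esymm (Fin 5) ℂ 3)) = c + x i ^ 2 := by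
    intro i; rw [key, hsum]; ring
  rw [LinearIndependent.pair_iff]
  intro s t h
  have h' : ∀ i, s + t * (c + x i ^ 2) = 0 := by
    intro i
    have := congrFun h i
    simpa [key' i] using this
  have ht : t = 0 := by
    by_contra ht
    have hsq : ∀ i, x i ^ 2 = x 0 ^ 2 := by
      intro i
      have h0 := h' 0
      have hi := h' i
      have : t * (x i ^ 2 - x 0 ^ 2) = 0 := by linear_combination hi - h0
      rcases mul_eq_zero.mp this with h | h
      · exact absurd h ht
      · linear_combination h
    have hpm : ∀ i, x i = x 0 ∨ x i = - x 0 := by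
      intro i
      have : (x i - x 0) * (x i + x 0) = 0 := by linear_combination hsq i
      rcases mul_eq_zero.mp this with h | h
      · left; linear_combination h
      · right; linear_combination h
    by_cases hx0 : x 0 = 0
    · apply hx
      funext i
      rcases hpm i with h | h <;> simp [h, hx0]
    · apply hx0
      rcases hpm 1 with e1 | e1 <;> rcases hpm 2 with e2 | e2 <;>
        rcases hpm 3 with e3 | e3 <;> rcases hpm 4 with e4 | e4 <;>
      rw [e1, e2, e3, e4] at hsum <;>
      first
        | linear_combination hsum / 5
        | linear_combination hsum / 3
        | linear_combination hsum
        | linear_combination -hsum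
        | linear_combination -hsum / 3
  refine ⟨?_, ht⟩
  have := h' 0
  rw [ht] at this
  simpa using this
end
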